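/- arXiv:2212.12445 — 3 statements merged into one kernel-verified Lean document; each statement's English description precedes it below -/
import Mathlib

section
/- Let (X,f) and (Y,g) be BTDSs, where (X,τ1,τ2) and (Y,ψ1,ψ2) are bitopological spaces, and suppose f ≈^H_F g via a BTDS-homotopy H. If (Y,ψ1,ψ2) is pairwise T3 and pairwise locally compact, then Y has the H-Rothberger property if and only if Y has the H-almost Rothberger property. -/
open Set Topology

universe u v w

/-- A map between bitopological spaces is pairwise continuous if it is continuous
with respect to the first topologies and with respect to the second topologies. -/
def PairwiseContinuous {X : Type u} {Y : Type v}
    (t1 t2 : TopologicalSpace X) (s1 s2 : TopologicalSpace Y) (f : X → Y) : Prop :=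
  Continuous[t1, s1] f ∧ Continuous[t2, s2] f

/-- The product topology on `X × [0,1]` where `X` carries `t` and `[0,1]` the usual topology. -/
def prodI {X : Type u} (t : TopologicalSpace X) : TopologicalSpace (X × unitInterval) :=
  @instTopologicalSpaceProd X unitInterval t inferInstance

/-- A BTDS-homotopy between `f` and `g` relative to `F`:
a pairwise continuous `H : X × [0,1] → Y` with `H(x,0) = F(f x)` and `H(x,1) = g(F x)`. -/
def IsBTDSHomotopy {X : Type u} {Y : Type v}
    (t1 t2 : TopologicalSpace X) (s1 s2 : TopologicalSpace Y)
    (f : X → X) (g : Y → Y) (F : X → Y) (H : X × unitInterval → Y) : Prop :=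
  PairwiseContinuous (prodI t1) (prodI t2) s1 s2 H ∧
    (∀ x, H (x, 0) = F (f x)) ∧ (∀ x, H (x, 1) = g (F x))

/-- A BTDS-iteration homotopy between `f` and `g` relative to `F`. -/
def IsBTDSIterHomotopy {X : Type u} {Y : Type v}
    (t1 t2 : TopologicalSpace X) (s1 s2 : TopologicalSpace Y)
    (f : X → X) (g : Y → Y) (F : X → Y) (H : X × unitInterval → Y) : Prop :=
  PairwiseContinuous (prodI t1) (prodI t2) s1 s2 H ∧
    (∀ (x : X) (n : ℕ), H (f^[n + 1] x, 0) = F (f (f^[n] x))) ∧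
    (∀ (x : X) (n : ℕ), H (f^[n + 1] x, 1) = g (F (f^[n] x)))

/-- A bitopological path in `(X, s1, s2)` from `x` to `y`. -/
def IsBitopPath {X : Type u} (s1 s2 : TopologicalSpace X)
    (F : unitInterval → X) (x y : X) : Prop :=
  PairwiseContinuous inferInstance inferInstance s1 s2 F ∧ F 0 = x ∧ F 1 = y

/-- A BTDS-path homotopy between `f` and `g` relative to the bitopological path `F`
from `x` to `y`. -/
def IsBTDSPathHomotopy {X : Type u} (s1 s2 : TopologicalSpace X)
    (f : unitInterval → unitInterval) (g : X → X) (F : unitInterval → X) (x y : X)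
    (H : unitInterval × unitInterval → X) : Prop :=
  PairwiseContinuous inferInstance inferInstance s1 s2 H ∧
    (∀ m : unitInterval, 0 < (m : ℝ) → (m : ℝ) < 1 →
      H (m, 0) = F (f m) ∧ H (m, 1) = g (F m)) ∧
    (∀ n : unitInterval, H (0, n) = x ∧ H (1, n) = y)

/-- `𝒪_i`: the collection of all open covers w.r.t. the topology `s`. -/
def OpenCovers {Y : Type v} (s : TopologicalSpace Y) : Set (Set (Set Y)) :=
  {𝒰 | (∀ U ∈ 𝒰, IsOpen[s] U) ∧ ⋃₀ 𝒰 = univ}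

/-- `𝒪^D_{ij}`: families of `si`-open sets whose union is `sj`-dense. -/
def DenseFamilies {Y : Type v} (si sj : TopologicalSpace Y) : Set (Set (Set Y)) :=
  {𝒰 | (∀ U ∈ 𝒰, IsOpen[si] U) ∧ @closure Y sj (⋃₀ 𝒰) = univ}

/-- `𝒪̄_{ij}`: families of `si`-open sets whose `sj`-closures cover `Y`. -/
def ClosureCovers {Y : Type v} (si sj : TopologicalSpace Y) : Set (Set (Set Y)) :=
  {𝒰 | (∀ U ∈ 𝒰, IsOpen[si] U) ∧ (⋃ U ∈ 𝒰, @closure Y sj U) = univ}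

/-- `S_1^H(𝒜, ℬ)` relative to the homotopy `H`. -/
def S1H {X : Type u} {Y : Type v} (H : X × unitInterval → Y)
    (A B : Set (Set (Set Y))) : Prop :=
  ∀ 𝒰 : ℕ → Set (Set Y), (∀ n, 𝒰 n ∈ A) →
    ∀ x : X, (∀ n, H (x, 0) ∈ ⋃₀ 𝒰 n) →
      ∃ U : ℕ → Set Y, (∀ n, U n ∈ 𝒰 n) ∧ (∀ n, H (x, 1) ∈ U n) ∧ Set.range U ∈ B

/-- `S_fin^H(𝒜, ℬ)` relative to the homotopy `H`. -/
def SfinH {X : Type u} {Y : Type v} (H : X × unitInterval → Y)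
    (A B : Set (Set (Set Y))) : Prop :=
  ∀ 𝒰 : ℕ → Set (Set Y), (∀ n, 𝒰 n ∈ A) →
    ∀ x : X, (∀ n, H (x, 0) ∈ ⋃₀ 𝒰 n) →
      ∃ 𝒱 : ℕ → Set (Set Y), (∀ n, (𝒱 n).Finite ∧ 𝒱 n ⊆ 𝒰 n) ∧
        (∀ n, H (x, 1) ∈ ⋃₀ 𝒱 n) ∧ (⋃ n, 𝒱 n) ∈ B

/-- `S_1^PH(𝒜, ℬ)` relative to the path homotopy `H`. -/
def S1PH {X : Type u} (H : unitInterval × unitInterval → X)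
    (A B : Set (Set (Set X))) : Prop :=
  ∀ 𝒰 : ℕ → Set (Set X), (∀ n, 𝒰 n ∈ A) →
    ∀ m : unitInterval, 0 < (m : ℝ) → (m : ℝ) < 1 → (∀ n, H (m, 0) ∈ ⋃₀ 𝒰 n) →
      ∃ U : ℕ → Set X, (∀ n, U n ∈ 𝒰 n) ∧ (∀ n, H (m, 1) ∈ U n) ∧ Set.range U ∈ B

/-- `S_fin^PH(𝒜, ℬ)` relative to the path homotopy `H`. -/
def SfinPH {X : Type u} (H : unitInterval × unitInterval → X)
    (A B : Set (Set (Set X))) : Prop :=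
  ∀ 𝒰 : ℕ → Set (Set X), (∀ n, 𝒰 n ∈ A) →
    ∀ m : unitInterval, 0 < (m : ℝ) → (m : ℝ) < 1 → (∀ n, H (m, 0) ∈ ⋃₀ 𝒰 n) →
      ∃ 𝒱 : ℕ → Set (Set X), (∀ n, (𝒱 n).Finite ∧ 𝒱 n ⊆ 𝒰 n) ∧
        (∀ n, H (m, 1) ∈ ⋃₀ 𝒱 n) ∧ (⋃ n, 𝒱 n) ∈ B

/-- `Y` has the H-Rothberger property (both the (1,2) and the (2,1) versions). -/
def HRothberger {X : Type u} {Y : Type v} (H : X × unitInterval → Y)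
    (s1 s2 : TopologicalSpace Y) : Prop :=
  S1H H (OpenCovers s1) (OpenCovers s2) ∧ S1H H (OpenCovers s2) (OpenCovers s1)

/-- `Y` has the H-almost Rothberger property. -/
def HAlmostRothberger {X : Type u} {Y : Type v} (H : X × unitInterval → Y)
    (s1 s2 : TopologicalSpace Y) : Prop :=
  S1H H (OpenCovers s1) (ClosureCovers s1 s2) ∧ S1H H (OpenCovers s2) (ClosureCovers s2 s1)

/-- `Y` has the H-weak Rothberger property. -/
def HWeakRothberger {X : Type u} {Y : Type v} (H : X × unitInterval → Y)
    (s1 s2 : TopologicalSpace Y) : Prop :=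
  S1H H (OpenCovers s1) (DenseFamilies s1 s2) ∧ S1H H (OpenCovers s2) (DenseFamilies s2 s1)

/-- `Y` has the H-Menger property. -/
def HMenger {X : Type u} {Y : Type v} (H : X × unitInterval → Y)
    (s1 s2 : TopologicalSpace Y) : Prop :=
  SfinH H (OpenCovers s1) (OpenCovers s2) ∧ SfinH H (OpenCovers s2) (OpenCovers s1)

/-- `Y` has the H-almost Menger property. -/
def HAlmostMenger {X : Type u} {Y : Type v} (H : X × unitInterval → Y)
    (s1 s2 : TopologicalSpace Y) : Prop :=
  SfinH H (OpenCovers s1) (ClosureCovers s1 s2) ∧ SfinH H (OpenCovers s2) (ClosureCovers s2 s1)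

/-- `Y` has the H-weak Menger property. -/
def HWeakMenger {X : Type u} {Y : Type v} (H : X × unitInterval → Y)
    (s1 s2 : TopologicalSpace Y) : Prop :=
  SfinH H (OpenCovers s1) (DenseFamilies s1 s2) ∧ SfinH H (OpenCovers s2) (DenseFamilies s2 s1)

/-- `X` has the PH-Rothberger property. -/
def PHRothberger {X : Type u} (H : unitInterval × unitInterval → X)
    (s1 s2 : TopologicalSpace X) : Prop :=
  S1PH H (OpenCovers s1) (OpenCovers s2) ∧ S1PH H (OpenCovers s2) (OpenCovers s1)

/-- `X` has the PH-almost Rothberger property. -/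
def PHAlmostRothberger {X : Type u} (H : unitInterval × unitInterval → X)
    (s1 s2 : TopologicalSpace X) : Prop :=
  S1PH H (OpenCovers s1) (ClosureCovers s1 s2) ∧ S1PH H (OpenCovers s2) (ClosureCovers s2 s1)

/-- `X` has the PH-weak Rothberger property. -/
def PHWeakRothberger {X : Type u} (H : unitInterval × unitInterval → X)
    (s1 s2 : TopologicalSpace X) : Prop :=
  S1PH H (OpenCovers s1) (DenseFamilies s1 s2) ∧ S1PH H (OpenCovers s2) (DenseFamilies s2 s1)

/-- `X` has the PH-Menger property. -/
def PHMenger {X : Type u} (H : unitInterval × unitInterval → X)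
    (s1 s2 : TopologicalSpace X) : Prop :=
  SfinPH H (OpenCovers s1) (OpenCovers s2) ∧ SfinPH H (OpenCovers s2) (OpenCovers s1)

/-- `X` has the PH-almost Menger property. -/
def PHAlmostMenger {X : Type u} (H : unitInterval × unitInterval → X)
    (s1 s2 : TopologicalSpace X) : Prop :=
  SfinPH H (OpenCovers s1) (ClosureCovers s1 s2) ∧ SfinPH H (OpenCovers s2) (ClosureCovers s2 s1)

/-- `X` has the PH-weak Menger property. -/
def PHWeakMenger {X : Type u} (H : unitInterval × unitInterval → X)
    (s1 s2 : TopologicalSpace X) : Prop :=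
  SfinPH H (OpenCovers s1) (DenseFamilies s1 s2) ∧ SfinPH H (OpenCovers s2) (DenseFamilies s2 s1)

/-- `s1` is regular with respect to `s2`. -/
def RegularWRT {Y : Type v} (s1 s2 : TopologicalSpace Y) : Prop :=
  ∀ (x : Y) (P : Set Y), IsClosed[s1] P → x ∉ P →
    ∃ U V : Set Y, IsOpen[s1] U ∧ IsOpen[s2] V ∧ x ∈ U ∧ P ⊆ V ∧ U ∩ V = ∅

/-- `(Y, s1, s2)` is pairwise T1. -/
def PairwiseT1 {Y : Type v} (s1 s2 : TopologicalSpace Y) : Prop :=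
  ∀ x y : Y, x ≠ y →
    ∃ U V : Set Y, IsOpen[s1] U ∧ IsOpen[s2] V ∧ x ∈ U ∧ y ∉ U ∧ y ∈ V ∧ x ∉ V

/-- `(Y, s1, s2)` is pairwise regular. -/
def PairwiseRegular {Y : Type v} (s1 s2 : TopologicalSpace Y) : Prop :=
  RegularWRT s1 s2 ∧ RegularWRT s2 s1

/-- `(Y, s1, s2)` is pairwise T3. -/
def PairwiseT3 {Y : Type v} (s1 s2 : TopologicalSpace Y) : Prop :=
  PairwiseRegular s1 s2 ∧ PairwiseT1 s1 s2

/-- `s1` is locally compact with respect to `s2`. -/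
def LocallyCompactWRT {Y : Type v} (s1 s2 : TopologicalSpace Y) : Prop :=
  ∀ x : Y, ∃ N : Set Y, N ∈ @nhds Y s2 x ∧ @IsCompact Y s1 N

/-- `(Y, s1, s2)` is pairwise locally compact. -/
def PairwiseLocallyCompact {Y : Type v} (s1 s2 : TopologicalSpace Y) : Prop :=
  LocallyCompactWRT s1 s2 ∧ LocallyCompactWRT s2 s1

/-- A topological space is a P-space if the union of countably many closed sets is closed. -/
def IsPSpaceTop {Y : Type v} (s : TopologicalSpace Y) : Prop :=
  ∀ C : ℕ → Set Y, (∀ n, IsClosed[s] (C n)) → IsClosed[s] (⋃ n, C n)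

/-- `(Y, s1, s2)` is a pairwise P-space. -/
def PairwisePSpace {Y : Type v} (s1 s2 : TopologicalSpace Y) : Prop :=
  IsPSpaceTop s1 ∧ IsPSpaceTop s2

/-!
Pairwise regularity together with pairwise local compactness forces `ψ₁ = ψ₂`. Indeed, if `U` is
`ψ₁`-open and `x ∈ U`, pick a `ψ₂`-neighbourhood `N` of `x` that is `ψ₁`-compact; by regularity
and compactness the `ψ₁`-compact set `N \ U` is separated from `x` by a `ψ₂`-open set, so `U` is a
`ψ₂`-neighbourhood of `x`. For a single regular topology, almost Rothberger implies Rothberger: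
select from the covers by open sets whose closures lie in members of the given covers, then
replace each selected set by a member containing its closure.
-/

section Bitopological

variable {Y : Type v} {s1 s2 : TopologicalSpace Y}

theorem PairwiseT1.symm (h : PairwiseT1 s1 s2) : PairwiseT1 s2 s1 := by
  intro x y hxy
  obtain ⟨U, V, hU, hV, hyU, hxU, hxV, hyV⟩ := h y x hxy.symm
  exact ⟨V, U, hV, hU, hxV, hyV, hyU, hxU⟩

theorem PairwiseT1.t1Space_snd (h : PairwiseT1 s1 s2) : @T1Space Y s2 :=
  (@t1Space_iff_exists_open Y s2).2 fun x y hxy => by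
    obtain ⟨-, V, -, hV, -, -, hxV, hyV⟩ := h y x (Ne.symm hxy)
    exact ⟨V, hV, hxV, hyV⟩

theorem RegularWRT.disjoint_nhds (hreg : RegularWRT s2 s1) (hT1 : PairwiseT1 s1 s2)
    {x y : Y} (hxy : x ≠ y) : Disjoint (@nhds Y s1 y) (@nhds Y s2 x) := by
  obtain ⟨U, V, hU, hV, hxU, hyV, hUV⟩ :=
    hreg x {y} (@isClosed_singleton Y s2 hT1.t1Space_snd y) hxy
  exact Filter.disjoint_of_disjoint_of_mem (Set.disjoint_iff_inter_eq_empty.2 hUV).symm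
    (@IsOpen.mem_nhds Y s1 _ _ hV (hyV rfl)) (@IsOpen.mem_nhds Y s2 _ _ hU hxU)

theorem RegularWRT.disjoint_nhdsSet_nhds (hreg : RegularWRT s2 s1) (hT1 : PairwiseT1 s1 s2)
    {K : Set Y} {x : Y} (hK : @IsCompact Y s1 K) (hx : x ∉ K) :
    Disjoint (@nhdsSet Y s1 K) (@nhds Y s2 x) :=
  (@IsCompact.disjoint_nhdsSet_left Y s1 _ _ hK).2 fun _ hy =>
    hreg.disjoint_nhds hT1 (ne_of_mem_of_not_mem hy hx).symm

theorem RegularWRT.nhds_le_nhds (hreg : RegularWRT s2 s1) (hT1 : PairwiseT1 s1 s2)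
    (hLC : LocallyCompactWRT s1 s2) (x : Y) : @nhds Y s2 x ≤ @nhds Y s1 x := by
  intro U hU
  obtain ⟨V, hVU, hV, hxV⟩ := (@mem_nhds_iff Y s1 x U).1 hU
  obtain ⟨N, hN, hNc⟩ := hLC x
  have hK : @IsCompact Y s1 (N \ V) := @IsCompact.diff Y s1 _ _ hNc hV
  have hKc : (N \ V)ᶜ ∈ @nhds Y s2 x :=
    Filter.disjoint_principal_left.1 <|
      (hreg.disjoint_nhdsSet_nhds hT1 hK fun h => h.2 hxV).mono_left
        (@principal_le_nhdsSet Y s1 _)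
  filter_upwards [hN, hKc] with y hyN hyK
  exact hVU (Classical.not_not.1 fun hyV => hyK ⟨hyN, hyV⟩)

theorem PairwiseT3.eq_of_pairwiseLocallyCompact (hT3 : PairwiseT3 s1 s2)
    (hLC : PairwiseLocallyCompact s1 s2) : s1 = s2 :=
  le_antisymm (le_of_nhds_le_nhds (hT3.1.1.nhds_le_nhds hT3.2.symm hLC.2))
    (le_of_nhds_le_nhds (hT3.1.2.nhds_le_nhds hT3.2 hLC.1))

theorem RegularWRT.regularSpace (h : RegularWRT s1 s1) : @RegularSpace Y s1 := by
  let _ := s1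
  refine ⟨fun {P x} hP hx => ?_⟩
  obtain ⟨U, V, hU, hV, hxU, hPV, hUV⟩ := h x P hP hx
  exact Filter.disjoint_of_disjoint_of_mem (Set.disjoint_iff_inter_eq_empty.2 hUV).symm
    (hV.mem_nhdsSet.2 hPV) (hU.mem_nhds hxU)

end Bitopological

section SelectionPrinciples

variable {X : Type u} {Y : Type v}

theorem S1H.mono_right {H : X × unitInterval → Y} {A B B' : Set (Set (Set Y))}
    (h : S1H H A B) (hB : B ⊆ B') : S1H H A B' := fun 𝒰 h𝒰 x hx =>
  let ⟨U, hU, hxU, hB'⟩ := h 𝒰 h𝒰 x hx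
  ⟨U, hU, hxU, hB hB'⟩

theorem openCovers_subset_closureCovers (s t : TopologicalSpace Y) :
    OpenCovers s ⊆ ClosureCovers s t := by
  rintro 𝒰 ⟨h𝒰o, h𝒰⟩
  refine ⟨h𝒰o, eq_univ_of_univ_subset ?_⟩
  rw [← h𝒰, sUnion_eq_biUnion]
  exact iUnion₂_mono fun U _ => @subset_closure Y t U

variable [TopologicalSpace Y]

def closureRefinement (𝒰 : Set (Set Y)) : Set (Set Y) :=
  {V | IsOpen V ∧ ∃ U ∈ 𝒰, closure V ⊆ U}

theorem closureRefinement_mem_openCovers [RegularSpace Y] {𝒰 : Set (Set Y)}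
    (h𝒰 : 𝒰 ∈ OpenCovers ‹TopologicalSpace Y›) :
    closureRefinement 𝒰 ∈ OpenCovers ‹TopologicalSpace Y› := by
  refine ⟨fun V hV => hV.1, eq_univ_of_forall fun y => ?_⟩
  obtain ⟨U, hU, hyU⟩ := h𝒰.2.symm ▸ mem_univ y
  obtain ⟨V, ⟨hyV, hV⟩, hVU⟩ :=
    (hasBasis_opens_closure y).mem_iff.1 ((h𝒰.1 U hU).mem_nhds hyU)
  exact ⟨V, ⟨hV, U, hU, hVU⟩, hyV⟩

theorem S1H.of_closureCovers [RegularSpace Y] {H : X × unitInterval → Y}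
    (h : S1H H (OpenCovers ‹_›) (ClosureCovers ‹_› ‹_›)) :
    S1H H (OpenCovers ‹TopologicalSpace Y›) (OpenCovers ‹_›) := by
  intro 𝒰 h𝒰 x _
  have h𝒲 n := closureRefinement_mem_openCovers (h𝒰 n)
  obtain ⟨V, hV, hxV, -, hVcl⟩ := h _ h𝒲 x fun n => (h𝒲 n).2.symm ▸ mem_univ _
  choose U hU hVU using fun n => (hV n).2
  refine ⟨U, hU, fun n => hVU n (subset_closure (hxV n)), ?_, eq_univ_of_univ_subset ?_⟩
  · rintro _ ⟨n, rfl⟩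
    exact (h𝒰 n).1 _ (hU n)
  · rw [← hVcl, biUnion_range, sUnion_range]
    exact iUnion_mono hVU

theorem s1H_openCovers_iff_closureCovers [RegularSpace Y] (H : X × unitInterval → Y) :
    S1H H (OpenCovers ‹TopologicalSpace Y›) (OpenCovers ‹_›) ↔
      S1H H (OpenCovers ‹_›) (ClosureCovers ‹_› ‹_›) :=
  ⟨fun h => h.mono_right (openCovers_subset_closureCovers _ _), S1H.of_closureCovers⟩

end SelectionPrinciples

theorem hRothberger_iff_hAlmostRothberger_general {X : Type u} {Y : Type v}
    (s1 s2 : TopologicalSpace Y)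
    (H : X × unitInterval → Y)
    (hT3 : PairwiseT3 s1 s2) (hLC : PairwiseLocallyCompact s1 s2) :
    HRothberger H s1 s2 ↔ HAlmostRothberger H s1 s2 := by
  obtain rfl : s1 = s2 := hT3.eq_of_pairwiseLocallyCompact hLC
  let _ := s1
  have : RegularSpace Y := hT3.1.1.regularSpace
  exact and_congr (s1H_openCovers_iff_closureCovers H) (s1H_openCovers_iff_closureCovers H)

theorem hRothberger_iff_hAlmostRothberger {X : Type u} {Y : Type v}
    (t1 t2 : TopologicalSpace X) (s1 s2 : TopologicalSpace Y)
    (f : X → X) (g : Y → Y) (F : X → Y)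
    (hf : PairwiseContinuous t1 t2 t1 t2 f) (hg : PairwiseContinuous s1 s2 s1 s2 g)
    (hF : PairwiseContinuous t1 t2 s1 s2 F)
    (H : X × unitInterval → Y) (hH : IsBTDSHomotopy t1 t2 s1 s2 f g F H)
    (hT3 : PairwiseT3 s1 s2) (hLC : PairwiseLocallyCompact s1 s2) :
    HRothberger H s1 s2 ↔ HAlmostRothberger H s1 s2 :=
  hRothberger_iff_hAlmostRothberger_general s1 s2 H hT3 hLC
end

section
/- Let (X,f) and (Y,g) be BTDSs, where (X,τ1,τ2) and (Y,ψ1,ψ2) are bitopological spaces, and suppose f ≈^H_F g via a BTDS-homotopy H. If (Y,ψ1,ψ2) is a pairwise P-space, then Y has the H-almost Rothberger property if and only if Y has the H-weak Rothberger property. -/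
open Set Topology

universe u v w

/-! In a P-space the closure of a countable union is the union of the closures. `S1H` only
selects countable families `range U`, and for these, having dense union and having covering
closures coincide. -/

namespace IsPSpaceTop

variable {Y : Type v}

theorem closure_iUnion {s : TopologicalSpace Y} (hs : IsPSpaceTop s) (U : ℕ → Set Y) :
    @closure Y s (⋃ n, U n) = ⋃ n, @closure Y s (U n) := by
  let _ := s
  refine (closure_minimal (iUnion_mono fun n => subset_closure) ?_).antisymm
    (iUnion_subset fun n => closure_mono (subset_iUnion U n))
  exact hs _ fun n => isClosed_closure

theorem range_mem_closureCovers_iff {si sj : TopologicalSpace Y} (hP : IsPSpaceTop sj)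
    (U : ℕ → Set Y) : range U ∈ ClosureCovers si sj ↔ range U ∈ DenseFamilies si sj := by
  simp only [ClosureCovers, DenseFamilies, mem_ofPred_eq, biUnion_range, sUnion_range,
    hP.closure_iUnion]

end IsPSpaceTop

theorem S1H_congr_range {X : Type u} {Y : Type v} (H : X × unitInterval → Y)
    {A B B' : Set (Set (Set Y))} (h : ∀ U : ℕ → Set Y, range U ∈ B ↔ range U ∈ B') :
    S1H H A B ↔ S1H H A B' := by
  simp only [S1H, h]

theorem hAlmostRothberger_iff_hWeakRothberger_general {X : Type u} {Y : Type v}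
    (s1 s2 : TopologicalSpace Y)
    (H : X × unitInterval → Y)
    (hP : PairwisePSpace s1 s2) :
    HAlmostRothberger H s1 s2 ↔ HWeakRothberger H s1 s2 :=
  and_congr (S1H_congr_range H hP.2.range_mem_closureCovers_iff)
    (S1H_congr_range H hP.1.range_mem_closureCovers_iff)

theorem hAlmostRothberger_iff_hWeakRothberger {X : Type u} {Y : Type v}
    (t1 t2 : TopologicalSpace X) (s1 s2 : TopologicalSpace Y)
    (f : X → X) (g : Y → Y) (F : X → Y)
    (hf : PairwiseContinuous t1 t2 t1 t2 f) (hg : PairwiseContinuous s1 s2 s1 s2 g)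
    (hF : PairwiseContinuous t1 t2 s1 s2 F)
    (H : X × unitInterval → Y) (hH : IsBTDSHomotopy t1 t2 s1 s2 f g F H)
    (hP : PairwisePSpace s1 s2) :
    HAlmostRothberger H s1 s2 ↔ HWeakRothberger H s1 s2 :=
  hAlmostRothberger_iff_hWeakRothberger_general s1 s2 H hP
end

section
/- Let (X,f) and (Y,g) be BTDSs, where (X,τ1,τ2) and (Y,ψ1,ψ2) are bitopological spaces, and suppose f ≈^H_F g via a BTDS-homotopy H. If (Y,ψ1,ψ2) is a pairwise P-space, then Y has the H-almost Menger property if and only if Y has the H-weak Menger property. -/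
open Set Topology

universe u v w

/-! In a P-space the closure of a countable union is the union of the closures. Selections in
`S_fin` are countable, so for them "the union is dense" and "the closures cover" coincide. -/

theorem IsPSpaceTop.isClosed_iUnion {Y : Type v} {s : TopologicalSpace Y} (hP : IsPSpaceTop s)
    {ι : Type*} [Countable ι] {C : ι → Set Y} (hC : ∀ i, IsClosed[s] (C i)) :
    IsClosed[s] (⋃ i, C i) := by
  let _ := s
  cases isEmpty_or_nonempty ι
  · simp only [iUnion_of_empty, isClosed_empty]
  · obtain ⟨e, he⟩ := exists_surjective_nat ι
    rw [← he.iUnion_comp]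
    exact hP _ fun n => hC (e n)

theorem IsPSpaceTop.closure_sUnion {Y : Type v} {s : TopologicalSpace Y} (hP : IsPSpaceTop s)
    {𝒮 : Set (Set Y)} (h𝒮 : 𝒮.Countable) :
    closure[s] (⋃₀ 𝒮) = ⋃ S ∈ 𝒮, closure[s] S := by
  let _ := s
  have : Countable 𝒮 := h𝒮.to_subtype
  refine (closure_minimal ?_ ?_).antisymm
    (iUnion₂_subset fun S hS => closure_mono (subset_sUnion_of_mem hS))
  · exact sUnion_subset fun S hS => subset_iUnion₂_of_subset S hS subset_closure
  · rw [biUnion_eq_iUnion]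
    exact hP.isClosed_iUnion fun S => isClosed_closure

theorem closureCovers_subset_denseFamilies {Y : Type v} (si sj : TopologicalSpace Y) :
    ClosureCovers si sj ⊆ DenseFamilies si sj := by
  let _ := sj
  rintro 𝒰 ⟨h𝒰_open, h𝒰_cover⟩
  refine ⟨h𝒰_open, eq_univ_of_univ_subset ?_⟩
  rw [← h𝒰_cover]
  exact iUnion₂_subset fun U hU => closure_mono (subset_sUnion_of_mem hU)

theorem IsPSpaceTop.mem_closureCovers {Y : Type v} {si sj : TopologicalSpace Y}
    (hP : IsPSpaceTop sj) {𝒰 : Set (Set Y)} (h𝒰 : 𝒰.Countable) (hD : 𝒰 ∈ DenseFamilies si sj) :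
    𝒰 ∈ ClosureCovers si sj :=
  ⟨hD.1, hP.closure_sUnion h𝒰 ▸ hD.2⟩

section SfinH

variable {X : Type u} {Y : Type v} {H : X × unitInterval → Y}

theorem SfinH.mono_of_countable {A B B' : Set (Set (Set Y))} (h : SfinH H A B)
    (hBB' : ∀ 𝒲 ∈ B, 𝒲.Countable → 𝒲 ∈ B') : SfinH H A B' := by
  intro 𝒰 h𝒰 x hx
  obtain ⟨𝒱, h𝒱_fin, h𝒱_mem, h𝒱_B⟩ := h 𝒰 h𝒰 x hx
  exact ⟨𝒱, h𝒱_fin, h𝒱_mem,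
    hBB' _ h𝒱_B (countable_iUnion fun n => (h𝒱_fin n).1.countable)⟩

theorem SfinH.denseFamilies_of_closureCovers {A : Set (Set (Set Y))} {si sj : TopologicalSpace Y}
    (h : SfinH H A (ClosureCovers si sj)) : SfinH H A (DenseFamilies si sj) :=
  h.mono_of_countable fun _ h𝒲 _ => closureCovers_subset_denseFamilies si sj h𝒲

theorem SfinH.closureCovers_of_denseFamilies {A : Set (Set (Set Y))} {si sj : TopologicalSpace Y}
    (hP : IsPSpaceTop sj) (h : SfinH H A (DenseFamilies si sj)) :
    SfinH H A (ClosureCovers si sj) :=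
  h.mono_of_countable fun _ h𝒲 h𝒲_countable => hP.mem_closureCovers h𝒲_countable h𝒲

end SfinH

theorem hAlmostMenger_iff_hWeakMenger_general {X : Type u} {Y : Type v}
    (s1 s2 : TopologicalSpace Y)
    (H : X × unitInterval → Y)
    (hP : PairwisePSpace s1 s2) :
    HAlmostMenger H s1 s2 ↔ HWeakMenger H s1 s2 :=
  ⟨fun ⟨h12, h21⟩ => ⟨h12.denseFamilies_of_closureCovers, h21.denseFamilies_of_closureCovers⟩,
    fun ⟨h12, h21⟩ =>
      ⟨h12.closureCovers_of_denseFamilies hP.2, h21.closureCovers_of_denseFamilies hP.1⟩⟩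

theorem hAlmostMenger_iff_hWeakMenger {X : Type u} {Y : Type v}
    (t1 t2 : TopologicalSpace X) (s1 s2 : TopologicalSpace Y)
    (f : X → X) (g : Y → Y) (F : X → Y)
    (hf : PairwiseContinuous t1 t2 t1 t2 f) (hg : PairwiseContinuous s1 s2 s1 s2 g)
    (hF : PairwiseContinuous t1 t2 s1 s2 F)
    (H : X × unitInterval → Y) (hH : IsBTDSHomotopy t1 t2 s1 s2 f g F H)
    (hP : PairwisePSpace s1 s2) :
    HAlmostMenger H s1 s2 ↔ HWeakMenger H s1 s2 :=
  hAlmostMenger_iff_hWeakMenger_general s1 s2 H hP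
end
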